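/- arXiv:1002.1781 — 6 statements merged into one kernel-verified Lean document; each statement's English description precedes it below -/
import Mathlib

section
/- For every integer N ≥ 2 and every real P > 0, (1 + (N-1)P)^N ≥ (1 + NP)^{N-1}. -/
theorem stmt_2 (N : ℕ) (hN : 2 ≤ N) (P : ℝ) (hP : 0 < P) :
    (1 + ((N : ℝ) - 1) * P) ^ N ≥ (1 + (N : ℝ) * P) ^ (N - 1) := by
  have hN1 : (2:ℝ) ≤ (N:ℝ) := by exact_mod_cast hN
  set b : ℝ := 1 + (N:ℝ) * P with hbdef
  have hb : 0 < b := by nlinarith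
  have hPb : P / b < 1 := by rw [div_lt_one hb]; nlinarith
  have hber : 1 + (N:ℝ) * (-(P/b)) ≤ (1 + -(P/b))^N :=
    one_add_mul_le_pow (by nlinarith [div_nonneg hP.le hb.le]) N
  have ha : 1 + -(P/b) = (1 + ((N:ℝ)-1)*P)/b := by field_simp; ring
  rw [ha] at hber
  have hmul : (1 + (N:ℝ)*(-(P/b))) * b^N ≤ ((1+((N:ℝ)-1)*P)/b)^N * b^N :=
    mul_le_mul_of_nonneg_right hber (by positivity)
  have hr : ((1+((N:ℝ)-1)*P)/b)^N * b^N = (1+((N:ℝ)-1)*P)^N := by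
    rw [div_pow]; field_simp
  have hpows : b ^ N = b^(N-1) * b := by
    rw [← pow_succ, Nat.sub_add_cancel (by omega)]
  have hl : (1 + (N:ℝ)*(-(P/b))) * b^N = b^(N-1) := by
    rw [hpows]; field_simp; ring
  rw [hr, hl] at hmul
  exact hmul
end

section
/- For every integer N ≥ 2 and real P > 0, the function φ ↦ N/(2(N-1))·log(1 + Pφ(N-φ)) − (1/2)·log(1 + NPφ) is strictly decreasing on the interval [1, N]. -/
/-!
Writing `B = 1 + Pφ(N - φ)` and `D = 1 + NPφ`, the derivative of the function is
`NP/2 · ((N - 2φ)/((N - 1)B) - 1/D)`, so it is negative exactly when `(N - 2φ)D < (N - 1)B`.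
The difference of the two sides is `(2φ - 1) + Pφ(N(φ - 1) + φ)`, which is positive for `φ ≥ 1`.
-/

open Set

noncomputable section

/-- The gap `C₂ - C₁` between the two capacities, as a function of `φ`. -/
def capacityGap (N P φ : ℝ) : ℝ :=
  N / (2 * (N - 1)) * Real.log (1 + P * φ * (N - φ)) - (1 / 2) * Real.log (1 + N * P * φ)

variable {N P φ : ℝ}

lemma one_add_mul_mul_sub_pos (hP : 0 ≤ P) (hφ : φ ∈ Icc 0 N) : 0 < 1 + P * φ * (N - φ) := by
  have : 0 ≤ P * φ * (N - φ) := mul_nonneg (mul_nonneg hP hφ.1) (sub_nonneg.2 hφ.2)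
  linarith

lemma one_add_mul_mul_pos (hN : 0 ≤ N) (hP : 0 ≤ P) (hφ : 0 ≤ φ) : 0 < 1 + N * P * φ := by
  have : 0 ≤ N * P * φ := by positivity
  linarith

lemma hasDerivAt_capacityGap (hN : 1 < N) (hP : 0 ≤ P) (hφ : φ ∈ Icc 0 N) :
    HasDerivAt (capacityGap N P)
      (N * P / 2 * ((N - 2 * φ) / ((N - 1) * (1 + P * φ * (N - φ))) - 1 / (1 + N * P * φ))) φ := by
  have hB := one_add_mul_mul_sub_pos hP hφ
  have hD := one_add_mul_mul_pos (zero_le_one.trans hN.le) hP hφ.1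
  have hB' : HasDerivAt (fun x => 1 + P * x * (N - x)) (P * (N - 2 * φ)) φ := by
    refine ((((hasDerivAt_id φ).const_mul P).mul
      ((hasDerivAt_const φ N).sub (hasDerivAt_id φ))).const_add 1).congr_deriv ?_
    simp only [Pi.sub_apply, id, mul_one, zero_sub, mul_neg]
    ring
  have hD' : HasDerivAt (fun x => 1 + N * P * x) (N * P) φ := by
    simpa using ((hasDerivAt_id φ).const_mul (N * P)).const_add 1
  refine (((hB'.log hB.ne').const_mul (N / (2 * (N - 1)))).sub
    ((hD'.log hD.ne').const_mul (1 / 2))).congr_deriv ?_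
  have : N - 1 ≠ 0 := by linarith
  field_simp

lemma sub_two_mul_mul_lt (hN : 0 ≤ N) (hP : 0 ≤ P) (hφ : 1 ≤ φ) :
    (N - 2 * φ) * (1 + N * P * φ) < (N - 1) * (1 + P * φ * (N - φ)) := by
  have hφ₀ : 0 ≤ φ := zero_le_one.trans hφ
  have h : 0 ≤ P * φ * (N * (φ - 1) + φ) :=
    mul_nonneg (mul_nonneg hP hφ₀) (add_nonneg (mul_nonneg hN (sub_nonneg.2 hφ)) hφ₀)
  nlinarith

lemma capacityGap_deriv_neg (hN : 1 < N) (hP : 0 < P) (hφ : φ ∈ Icc 1 N) :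
    N * P / 2 * ((N - 2 * φ) / ((N - 1) * (1 + P * φ * (N - φ))) - 1 / (1 + N * P * φ)) < 0 := by
  have hB := one_add_mul_mul_sub_pos hP.le ⟨by linarith [hφ.1], hφ.2⟩
  have hD := one_add_mul_mul_pos (zero_le_one.trans hN.le) hP.le (by linarith [hφ.1])
  have hN1 : 0 < N - 1 := by linarith
  refine mul_neg_of_pos_of_neg (by positivity) (sub_neg.2 ?_)
  rw [div_lt_div_iff₀ (by positivity) hD, one_mul]
  exact sub_two_mul_mul_lt (by linarith) hP.le hφ.1

theorem capacityGap_strictAntiOn (hN : 1 < N) (hP : 0 < P) :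
    StrictAntiOn (capacityGap N P) (Icc 1 N) := by
  have hderiv : ∀ φ ∈ Icc 1 N, HasDerivAt (capacityGap N P)
      (N * P / 2 * ((N - 2 * φ) / ((N - 1) * (1 + P * φ * (N - φ))) - 1 / (1 + N * P * φ))) φ :=
    fun φ hφ => hasDerivAt_capacityGap hN hP.le ⟨by linarith [hφ.1], hφ.2⟩
  exact strictAntiOn_of_hasDerivWithinAt_neg (convex_Icc 1 N)
    (fun φ hφ => (hderiv φ hφ).continuousAt.continuousWithinAt)
    (fun φ hφ => (hderiv φ (interior_subset hφ)).hasDerivWithinAt)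
    (fun φ hφ => capacityGap_deriv_neg hN hP (interior_subset hφ))

end

theorem stmt_3 (N : ℕ) (hN : 2 ≤ N) (P : ℝ) (hP : 0 < P) :
    StrictAntiOn
      (fun φ : ℝ =>
        (N : ℝ) / (2 * ((N : ℝ) - 1)) * Real.log (1 + P * φ * ((N : ℝ) - φ)) -
          (1 / 2) * Real.log (1 + (N : ℝ) * P * φ))
      (Set.Icc 1 (N : ℝ)) :=
  capacityGap_strictAntiOn (by exact_mod_cast hN) hP
end

section
/- Fix an integer N ≥ 2, and for each P > 0 let φ(P) denote the unique solution in [1,N] of (1+NPφ)^{N-1} = (1+Pφ(N-φ))^N. Then φ is strictly increasing in P. -/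
/-!
For a solution φ at P put s = (1 + NPφ) / (1 + Pφ(N - φ)). The equation says exactly that
s ^ N = 1 + NPφ and s ^ (N - 1) = 1 + Pφ(N - φ), i.e. NPφ = s ^ N - 1 and Pφ² = s ^ N - s ^ (N - 1).
Solving, φ = N / ∑_{k<N} s⁻ᵏ and P = (s ^ N - 1) ∑_{k<N} s⁻ᵏ / N² = ∑_{k<N} (s ^ (N - k) - s⁻ᵏ) / N².
For N ≥ 2 the first is strictly increasing in s > 0 and the second is increasing, so P₁ < P₂ forces
s₁ < s₂ and hence φ(P₁) < φ(P₂).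
-/

open Finset Set

lemma div_pow_of_pow_eq_pow_succ {K : Type*} [Field K] {a b : K} (ha : a ≠ 0) (hb : b ≠ 0)
    {n : ℕ} (h : a ^ n = b ^ (n + 1)) : (a / b) ^ (n + 1) = a ∧ (a / b) ^ n = b := by
  constructor
  · rw [div_pow, ← h, pow_succ]; field_simp
  · rw [div_pow, h, pow_succ]; field_simp

noncomputable def invGeomSum (N : ℕ) (s : ℝ) : ℝ := ∑ k ∈ range N, s⁻¹ ^ k

noncomputable def paramPhi (N : ℕ) (s : ℝ) : ℝ := N / invGeomSum N s

noncomputable def paramP (N : ℕ) (s : ℝ) : ℝ := (s ^ N - 1) * invGeomSum N s / N ^ 2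

section

variable {N : ℕ}

lemma invGeomSum_pos (hN : 1 ≤ N) {s : ℝ} (hs : 0 < s) : 0 < invGeomSum N s :=
  sum_pos (fun k _ => by positivity) (nonempty_range_iff.mpr (by omega))

lemma invGeomSum_mul_pow_sub_pow (hN : 1 ≤ N) {s : ℝ} (hs : s ≠ 0) :
    invGeomSum N s * (s ^ N - s ^ (N - 1)) = s ^ N - 1 := by
  obtain ⟨n, rfl⟩ : ∃ n, N = n + 1 := ⟨N - 1, by omega⟩
  simp only [add_tsub_cancel_right]
  clear hN
  induction n with
  | zero => simp [invGeomSum]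
  | succ n ih =>
    rw [invGeomSum, sum_range_succ, ← invGeomSum, add_mul,
      show s ^ (n + 1 + 1) - s ^ (n + 1) = s * (s ^ (n + 1) - s ^ n) by ring,
      mul_left_comm, ih, inv_pow]
    field_simp
    ring

lemma invGeomSum_strictAntiOn (hN : 2 ≤ N) : StrictAntiOn (invGeomSum N) (Ioi 0) := by
  intro a ha b hb hab
  have hinv : b⁻¹ < a⁻¹ := inv_strictAntiOn ha hb hab
  apply sum_lt_sum
  · intro k _
    exact pow_le_pow_left₀ (inv_pos.mpr hb).le hinv.le k
  · exact ⟨1, mem_range.mpr (by omega), by simpa using hinv⟩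

lemma paramPhi_strictMonoOn (hN : 2 ≤ N) : StrictMonoOn (paramPhi N) (Ioi 0) := by
  intro a ha b hb hab
  exact div_lt_div_of_pos_left (by positivity) (invGeomSum_pos (by omega) hb)
    (invGeomSum_strictAntiOn hN ha hb hab)

lemma paramP_eq_sum {s : ℝ} (hs : s ≠ 0) :
    paramP N s = (∑ k ∈ range N, (s ^ (N - k) - s⁻¹ ^ k)) / N ^ 2 := by
  rw [paramP, invGeomSum, mul_sum]
  congr 1
  refine sum_congr rfl fun k hk => ?_
  rw [pow_sub₀ s hs (mem_range.mp hk).le, inv_pow]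
  ring

lemma paramP_monotoneOn : MonotoneOn (paramP N) (Ioi 0) := by
  intro a (ha : 0 < a) b (hb : 0 < b) hab
  rw [paramP_eq_sum ha.ne', paramP_eq_sum hb.ne']
  gcongr

end

lemma exists_param_of_eq {N : ℕ} {P φ : ℝ} (hP : 0 < P) (hφ : φ ∈ Icc 1 (N : ℝ))
    (h : (1 + N * P * φ) ^ (N - 1) = (1 + P * φ * (N - φ)) ^ N) :
    ∃ s, 0 < s ∧ paramPhi N s = φ ∧ paramP N s = P := by
  obtain ⟨hφ1, hφN⟩ := hφ
  have hN : 1 ≤ N := by exact_mod_cast hφ1.trans hφN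
  have ha : 0 < 1 + N * P * φ := by positivity
  have hb : 0 < 1 + P * φ * (N - φ) := by
    have : 0 ≤ P * φ * (N - φ) := mul_nonneg (by positivity) (by linarith)
    linarith
  obtain ⟨hsN, hsN1⟩ := div_pow_of_pow_eq_pow_succ ha.ne' hb.ne' (n := N - 1)
    (by rwa [Nat.sub_add_cancel hN])
  rw [Nat.sub_add_cancel hN] at hsN
  set s := (1 + N * P * φ) / (1 + P * φ * (N - φ))
  have hG : invGeomSum N s * φ = N := by
    have hgeom := invGeomSum_mul_pow_sub_pow hN (s := s) (by positivity)
    rw [hsN, hsN1] at hgeom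
    refine mul_right_cancel₀ (by positivity : P * φ ≠ 0) ?_
    linear_combination hgeom
  have hGpos := invGeomSum_pos hN (s := s) (by positivity)
  refine ⟨s, by positivity, ?_, ?_⟩
  · rw [paramPhi, div_eq_iff hGpos.ne']
    linarith
  · rw [paramP, hsN]
    field_simp
    linear_combination N * P * hG

theorem stmt_5_general (N : ℕ) (hN : 2 ≤ N) (φ : ℝ → ℝ)
    (hsol : ∀ P : ℝ, 0 < P → φ P ∈ Set.Icc 1 (N : ℝ) ∧
      (1 + (N : ℝ) * P * φ P) ^ (N - 1) = (1 + P * φ P * ((N : ℝ) - φ P)) ^ N) :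
    StrictMonoOn φ (Set.Ioi (0 : ℝ)) := by
  intro P₁ hP₁ P₂ hP₂ hlt
  obtain ⟨s₁, hs₁, hφ₁, hP₁s⟩ := exists_param_of_eq hP₁ (hsol P₁ hP₁).1 (hsol P₁ hP₁).2
  obtain ⟨s₂, hs₂, hφ₂, hP₂s⟩ := exists_param_of_eq hP₂ (hsol P₂ hP₂).1 (hsol P₂ hP₂).2
  have hs : s₁ < s₂ := paramP_monotoneOn.reflect_lt hs₁ hs₂ (by rwa [hP₁s, hP₂s])
  rw [← hφ₁, ← hφ₂]
  exact paramPhi_strictMonoOn hN hs₁ hs₂ hs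

theorem stmt_5 (N : ℕ) (hN : 2 ≤ N) (φ : ℝ → ℝ)
    (hsol : ∀ P : ℝ, 0 < P → φ P ∈ Set.Icc 1 (N : ℝ) ∧
      (1 + (N : ℝ) * P * φ P) ^ (N - 1) = (1 + P * φ P * ((N : ℝ) - φ P)) ^ N)
    (huniq : ∀ P : ℝ, 0 < P → ∀ ψ : ℝ, ψ ∈ Set.Icc 1 (N : ℝ) →
      (1 + (N : ℝ) * P * ψ) ^ (N - 1) = (1 + P * ψ * ((N : ℝ) - ψ)) ^ N → ψ = φ P) :
    StrictMonoOn φ (Set.Ioi (0 : ℝ)) :=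
  stmt_5_general N hN φ hsol
end

section
/- Fix an integer N ≥ 2, and for each P > 0 let φ(P) ∈ [1,N] be the unique solution of (1+NPφ)^{N-1} = (1+Pφ(N-φ))^N. Then φ(P) → 1 as P → 0+. -/
open Real Set Filter Topology

/-!
Put `u = N P φ` and `v = P φ (N - φ)`, so that `N v = (N - φ) u` and the equation reads
`(N - 1) log (1 + u) = N log (1 + v)`. The bounds `u / (1 + u) ≤ log (1 + u)` and
`log (1 + v) ≤ v` turn it into `N - 1 ≤ (N - φ) (1 + u)`, i.e. `φ - 1 ≤ (N - φ) u ≤ N³ P`.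
Hence `1 ≤ φ P ≤ 1 + N³ P`, and `φ P → 1` by squeezing.
-/

lemma sub_one_le_of_pow_eq_pow {N : ℕ} {P x : ℝ} (hP : 0 < P) (hx : x ∈ Icc 1 (N : ℝ))
    (heq : (1 + (N : ℝ) * P * x) ^ (N - 1) = (1 + P * x * ((N : ℝ) - x)) ^ N) :
    x - 1 ≤ (N : ℝ) ^ 3 * P := by
  obtain ⟨hx1, hxN⟩ := hx
  set u := (N : ℝ) * P * x with hu_def
  set v := P * x * ((N : ℝ) - x)
  have hN1 : (1 : ℝ) ≤ N := hx1.trans hxN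
  have hu : 0 < u := by positivity
  have hv : 0 ≤ v := mul_nonneg (by positivity) (by linarith)
  have hlog : ((N : ℝ) - 1) * log (1 + u) = N * log (1 + v) := by
    have h := congrArg log heq
    rwa [log_pow, log_pow, Nat.cast_sub (by exact_mod_cast hN1), Nat.cast_one] at h
  have hlog_u : u / (1 + u) ≤ log (1 + u) := by
    have h := one_sub_inv_le_log_of_pos (by linarith : 0 < 1 + u)
    have h1 : 1 - (1 + u)⁻¹ = u / (1 + u) := by field_simp; ring
    rwa [h1] at h
  have hlog_v : log (1 + v) ≤ v := by linarith [log_le_sub_one_of_pos (by linarith : 0 < 1 + v)]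
  have hchain : ((N : ℝ) - 1) * (u / (1 + u)) ≤ ((N : ℝ) - x) * u :=
    calc ((N : ℝ) - 1) * (u / (1 + u)) ≤ ((N : ℝ) - 1) * log (1 + u) := by gcongr
      _ = N * log (1 + v) := hlog
      _ ≤ N * v := by gcongr
      _ = ((N : ℝ) - x) * u := by ring
  rw [mul_div_assoc', div_le_iff₀ (by positivity)] at hchain
  calc x - 1 ≤ ((N : ℝ) - x) * u := by nlinarith
    _ ≤ N * (N * P * N) := by rw [hu_def]; gcongr; linarith
    _ = (N : ℝ) ^ 3 * P := by ring

theorem stmt_6_general (N : ℕ) (φ : ℝ → ℝ)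
    (hsol : ∀ P : ℝ, 0 < P → φ P ∈ Set.Icc 1 (N : ℝ) ∧
      (1 + (N : ℝ) * P * φ P) ^ (N - 1) = (1 + P * φ P * ((N : ℝ) - φ P)) ^ N) :
    Filter.Tendsto φ (nhdsWithin 0 (Set.Ioi 0)) (nhds 1) := by
  have hupper : Tendsto (fun P : ℝ => 1 + (N : ℝ) ^ 3 * P) (𝓝[>] 0) (𝓝 1) := by
    have h : Tendsto (fun P : ℝ => 1 + (N : ℝ) ^ 3 * P) (𝓝 0) (𝓝 (1 + (N : ℝ) ^ 3 * 0)) :=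
      (continuous_const.add (continuous_const.mul continuous_id)).tendsto 0
    simpa using h.mono_left nhdsWithin_le_nhds
  refine tendsto_of_tendsto_of_tendsto_of_le_of_le' tendsto_const_nhds hupper ?_ ?_
  all_goals
    filter_upwards [self_mem_nhdsWithin] with P hP
  · exact (hsol P hP).1.1
  · linarith [sub_one_le_of_pow_eq_pow hP (hsol P hP).1 (hsol P hP).2]

theorem stmt_6 (N : ℕ) (hN : 2 ≤ N) (φ : ℝ → ℝ)
    (hsol : ∀ P : ℝ, 0 < P → φ P ∈ Set.Icc 1 (N : ℝ) ∧
      (1 + (N : ℝ) * P * φ P) ^ (N - 1) = (1 + P * φ P * ((N : ℝ) - φ P)) ^ N)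
    (huniq : ∀ P : ℝ, 0 < P → ∀ ψ : ℝ, ψ ∈ Set.Icc 1 (N : ℝ) →
      (1 + (N : ℝ) * P * ψ) ^ (N - 1) = (1 + P * ψ * ((N : ℝ) - ψ)) ^ N → ψ = φ P) :
    Filter.Tendsto φ (nhdsWithin 0 (Set.Ioi 0)) (nhds 1) :=
  stmt_6_general N φ hsol
end

section
/- Fix an integer N ≥ 2, and for each P > 0 let φ(P) ∈ [1,N] be the unique solution of (1+NPφ)^{N-1} = (1+Pφ(N-φ))^N. Then φ(P) → N as P → ∞. -/
/-!
Write `a = N - φ ∈ [0, N - 1]`. Dropping the `1` on the right of the defining equation and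
bounding `1 + NPφ ≤ (1 + N²)P` on the left (for `P ≥ 1`) gives `(Pa)^N ≤ ((1 + N²)P)^(N-1)`,
i.e. `a^N ≤ (1 + N²)^(N-1) / P`, so `a → 0`.
-/

open Filter Topology Set

theorem tendsto_zero_of_pow_le_const_div {f : ℝ → ℝ} {n : ℕ} (hn : n ≠ 0) (C : ℝ)
    (hf : ∀ᶠ x in atTop, 0 ≤ f x ∧ f x ^ n ≤ C / x) : Tendsto f atTop (𝓝 0) := by
  have hpow : Tendsto (fun x => f x ^ n) atTop (𝓝 0) :=
    squeeze_zero' (hf.mono fun x hx => pow_nonneg hx.1 n) (hf.mono fun x hx => hx.2)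
      (tendsto_const_nhds.div_atTop tendsto_id)
  have hroot : Tendsto (fun x => (f x ^ n) ^ (n⁻¹ : ℝ)) atTop (𝓝 0) := by
    simpa [Real.zero_rpow, hn] using hpow.rpow_const (Or.inr (inv_nonneg.2 n.cast_nonneg))
  exact hroot.congr' (hf.mono fun x hx => Real.pow_rpow_inv_natCast hx.1 hn)

theorem sub_pow_le_div_of_eq {N : ℕ} (hN : 1 ≤ N) {P φ : ℝ} (hP : 1 ≤ P) (hφ : φ ∈ Icc 1 (N : ℝ))
    (h : (1 + (N : ℝ) * P * φ) ^ (N - 1) = (1 + P * φ * ((N : ℝ) - φ)) ^ N) :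
    ((N : ℝ) - φ) ^ N ≤ (1 + (N : ℝ) ^ 2) ^ (N - 1) / P := by
  have ha : 0 ≤ (N : ℝ) - φ := sub_nonneg.2 hφ.2
  have hP0 : 0 < P := one_pos.trans_le hP
  have hbound : ((N : ℝ) - φ) ^ N * P ^ N ≤ (1 + (N : ℝ) ^ 2) ^ (N - 1) * P ^ (N - 1) :=
    calc ((N : ℝ) - φ) ^ N * P ^ N = (P * ((N : ℝ) - φ)) ^ N := by rw [mul_pow, mul_comm]
      _ ≤ (1 + P * φ * ((N : ℝ) - φ)) ^ N := by
        gcongr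
        nlinarith [mul_nonneg hP0.le ha, hφ.1]
      _ = (1 + (N : ℝ) * P * φ) ^ (N - 1) := h.symm
      _ ≤ ((1 + (N : ℝ) ^ 2) * P) ^ (N - 1) := by
        refine pow_le_pow_left₀ ?_ ?_ _
        · have := mul_nonneg (mul_nonneg N.cast_nonneg hP0.le) (zero_le_one.trans hφ.1)
          linarith
        nlinarith [mul_le_mul_of_nonneg_left hφ.2 (by positivity : (0 : ℝ) ≤ N * P)]
      _ = (1 + (N : ℝ) ^ 2) ^ (N - 1) * P ^ (N - 1) := mul_pow _ _ _
  rw [le_div_iff₀ hP0]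
  refine le_of_mul_le_mul_right ?_ (pow_pos hP0 (N - 1))
  rwa [mul_assoc, ← pow_succ', Nat.sub_add_cancel hN]

theorem stmt_7_general (N : ℕ) (hN : 2 ≤ N) (φ : ℝ → ℝ)
    (hsol : ∀ P : ℝ, 0 < P → φ P ∈ Set.Icc 1 (N : ℝ) ∧
      (1 + (N : ℝ) * P * φ P) ^ (N - 1) = (1 + P * φ P * ((N : ℝ) - φ P)) ^ N) :
    Filter.Tendsto φ Filter.atTop (nhds (N : ℝ)) := by
  have hgap : Tendsto (fun P => (N : ℝ) - φ P) atTop (𝓝 0) := by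
    refine tendsto_zero_of_pow_le_const_div (n := N) (by omega) ((1 + (N : ℝ) ^ 2) ^ (N - 1)) ?_
    filter_upwards [eventually_ge_atTop 1] with P hP
    obtain ⟨hφ, heq⟩ := hsol P (one_pos.trans_le hP)
    exact ⟨sub_nonneg.2 hφ.2, sub_pow_le_div_of_eq (by omega) hP hφ heq⟩
  simpa using (tendsto_const_nhds (x := (N : ℝ))).sub hgap

theorem stmt_7 (N : ℕ) (hN : 2 ≤ N) (φ : ℝ → ℝ)
    (hsol : ∀ P : ℝ, 0 < P → φ P ∈ Set.Icc 1 (N : ℝ) ∧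
      (1 + (N : ℝ) * P * φ P) ^ (N - 1) = (1 + P * φ P * ((N : ℝ) - φ P)) ^ N)
    (huniq : ∀ P : ℝ, 0 < P → ∀ ψ : ℝ, ψ ∈ Set.Icc 1 (N : ℝ) →
      (1 + (N : ℝ) * P * ψ) ^ (N - 1) = (1 + P * ψ * ((N : ℝ) - ψ)) ^ N → ψ = φ P) :
    Filter.Tendsto φ Filter.atTop (nhds (N : ℝ)) :=
  stmt_7_general N hN φ hsol
end

section
/- Fix an integer N ≥ 2 and real P > 0, and let φ ∈ [1,N] satisfy (1+NPφ)^{N-1} = (1+Pφ(N-φ))^N. Then (N−φ)·(1+NPφ)/(1+Pφ(N−φ)) > N−1. -/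
/-!
Put `a = 1 + NPφ` and `b = 1 + Pφ(N - φ)`. The equation `a ^ (N - 1) = b ^ N` says that
`a = v ^ N` and `b = v ^ (N - 1)` for a single `v > 1`, so the left-hand side is `(N - φ) v`.
Since `(N - φ)(a - 1) = N (b - 1)`, the claim `(N - φ) v > N - 1` becomes, after clearing
the denominator `v ^ N - 1`, the strict Bernoulli inequality `v ^ N > 1 + N (v - 1)`.
-/

lemma one_add_mul_sub_one_lt_pow {v : ℝ} (hv₀ : 0 ≤ v) (hv₁ : v ≠ 1) {n : ℕ} (hn : 1 < n) :
    1 + n * (v - 1) < v ^ n := by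
  have h := one_add_mul_self_lt_rpow_one_add (s := v - 1) (by linarith) (sub_ne_zero.2 hv₁)
    (p := n) (by exact_mod_cast hn)
  rwa [add_sub_cancel, Real.rpow_natCast] at h

lemma exists_pow_eq_and_pow_sub_one_eq {a b : ℝ} (ha : 0 ≤ a) (hb : 0 ≤ b) {n : ℕ} (hn : n ≠ 0)
    (h : a ^ (n - 1) = b ^ n) : ∃ v, 0 ≤ v ∧ v ^ n = a ∧ v ^ (n - 1) = b := by
  have hva : (a ^ (n⁻¹ : ℝ)) ^ n = a := Real.rpow_inv_natCast_pow ha hn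
  refine ⟨a ^ (n⁻¹ : ℝ), by positivity, hva, (pow_left_inj₀ (by positivity) hb hn).1 ?_⟩
  rw [← h, ← pow_mul, mul_comm, pow_mul, hva]

lemma sub_one_lt_mul_of_mul_pow_sub_one_eq {v x : ℝ} {n : ℕ} (hn : 1 < n) (hv : 1 < v)
    (h : x * (v ^ n - 1) = n * (v ^ (n - 1) - 1)) : (n : ℝ) - 1 < x * v := by
  have hpow : v ^ (n - 1) * v = v ^ n := pow_sub_one_mul (by omega) v
  have hbern := one_add_mul_sub_one_lt_pow (by linarith) hv.ne' hn
  have hden : 0 < v ^ n - 1 := by linarith [mul_pos (by positivity : (0 : ℝ) < n) (sub_pos.2 hv)]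
  refine lt_of_mul_lt_mul_right ?_ hden.le
  calc ((n : ℝ) - 1) * (v ^ n - 1) < n * (v ^ (n - 1) * v - v) := by rw [hpow]; linarith
    _ = x * v * (v ^ n - 1) := by linear_combination (-v) * h

theorem stmt_10 (N : ℕ) (hN : 2 ≤ N) (P : ℝ) (hP : 0 < P) (φ : ℝ)
    (hφ : φ ∈ Set.Icc 1 (N : ℝ))
    (heq : (1 + (N : ℝ) * P * φ) ^ (N - 1) = (1 + P * φ * ((N : ℝ) - φ)) ^ N) :
    ((N : ℝ) - φ) * (1 + (N : ℝ) * P * φ) / (1 + P * φ * ((N : ℝ) - φ)) > (N : ℝ) - 1 := by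
  obtain ⟨hφ₁, hφN⟩ := hφ
  have ha : 1 < 1 + (N : ℝ) * P * φ := by
    have : (0 : ℝ) < N := by exact_mod_cast (by omega : 0 < N)
    have : 0 < (N : ℝ) * P * φ := by positivity
    linarith
  have hb : 1 ≤ 1 + P * φ * ((N : ℝ) - φ) := by
    have : 0 ≤ P * φ * ((N : ℝ) - φ) := by
      have := sub_nonneg.2 hφN
      positivity
    linarith
  obtain ⟨v, hv₀, hva, hvb⟩ :=
    exists_pow_eq_and_pow_sub_one_eq (by linarith) (by linarith) (by omega : N ≠ 0) heq
  have hv : 1 < v := (one_lt_pow_iff_of_nonneg hv₀ (by omega)).1 (hva ▸ ha)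
  have hrel : ((N : ℝ) - φ) * (v ^ N - 1) = N * (v ^ (N - 1) - 1) := by
    rw [hva, hvb]; ring
  rw [← hva, ← hvb, ← pow_sub_one_mul (by omega) v, mul_div_assoc,
    mul_div_cancel_left₀ _ (by positivity)]
  exact sub_one_lt_mul_of_mul_pow_sub_one_eq (by omega) hv hrel
end
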